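/- A poset has one-step closure if and only if it is meet continuous and has weak one-step closure. -/

import Mathlib

open Set

section OrderDefs

variable {L : Type*} [Preorder L]

/-- Downward closure `↓A`. -/
def dw (A : Set L) : Set L := {x | ∃ a ∈ A, x ≤ a}

/-- Upward closure `↑A`. -/
def up (A : Set L) : Set L := {x | ∃ a ∈ A, a ≤ x}

/-- Scott closure of a set. -/
def scottCl (A : Set L) : Set L := @closure L (Topology.scott L Set.univ) A

/-- `A' = {x : ∃ directed D ⊆ ↓A with x = sup D}`. -/
def oneStep (A : Set L) : Set L :=
  {x | ∃ D : Set L, D ⊆ dw A ∧ D.Nonempty ∧ DirectedOn (· ≤ ·) D ∧ IsLUB D x}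

/-- `A'' = {x : ∃ directed D ⊆ ↓A with x ≤ sup D}`. -/
def weakOneStep (A : Set L) : Set L :=
  {x | ∃ D : Set L, D ⊆ dw A ∧ D.Nonempty ∧ DirectedOn (· ≤ ·) D ∧ ∃ y, IsLUB D y ∧ x ≤ y}

/-- A poset has one-step closure if `cl(A) = A'` for all `A`. -/
def HasOneStepClosure (L : Type*) [Preorder L] : Prop :=
  ∀ A : Set L, scottCl A = oneStep A

/-- A poset has weak one-step closure if `cl(A) = A''` for all `A`. -/
def HasWeakOneStepClosure (L : Type*) [Preorder L] : Prop :=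
  ∀ A : Set L, scottCl A = weakOneStep A

/-- Meet continuity: `x ≤ sup D` implies `x ∈ cl(↓D ∩ ↓x)`. -/
def MeetContinuous (L : Type*) [Preorder L] : Prop :=
  ∀ x : L, ∀ D : Set L, D.Nonempty → DirectedOn (· ≤ ·) D → ∀ s, IsLUB D s → x ≤ s →
    x ∈ scottCl (dw D ∩ dw ({x} : Set L))

/-- The way-below relation `x ≪ y`. -/
def wayBelow (x y : L) : Prop :=
  ∀ D : Set L, D.Nonempty → DirectedOn (· ≤ ·) D → ∀ s, IsLUB D s → y ≤ s →
    (D ∩ up ({x} : Set L)).Nonempty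

/-- The weakly way-below relation `x ≪_w y`. -/
def weaklyWayBelow (x y : L) : Prop :=
  ∀ D : Set L, D.Nonempty → DirectedOn (· ≤ ·) D → IsLUB D y →
    (D ∩ up ({x} : Set L)).Nonempty

/-- A continuous poset: each `⇓x` is directed with supremum `x`. -/
def ContinuousPoset (L : Type*) [Preorder L] : Prop :=
  ∀ x : L, {y | wayBelow y x}.Nonempty ∧ DirectedOn (· ≤ ·) {y | wayBelow y x} ∧
    IsLUB {y | wayBelow y x} x

/-- An exact poset: each `⇓_w x` is directed with supremum `x`. -/
def ExactPoset (L : Type*) [Preorder L] : Prop :=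
  ∀ x : L, {y | weaklyWayBelow y x}.Nonempty ∧ DirectedOn (· ≤ ·) {y | weaklyWayBelow y x} ∧
    IsLUB {y | weaklyWayBelow y x} x

/-- `F ≪ x` for a set `F`: every directed `D` with `sup D ≥ x` meets `↑F`. -/
def finWayBelow (F : Set L) (x : L) : Prop :=
  ∀ D : Set L, D.Nonempty → DirectedOn (· ≤ ·) D → ∀ s, IsLUB D s → x ≤ s →
    (D ∩ up F).Nonempty

/-- A quasicontinuous poset: each `fin(x)` is a directed family (Smyth preorder)
with `↑x = ⋂_{F ∈ fin(x)} ↑F`. -/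
def QuasicontinuousPoset (L : Type*) [Preorder L] : Prop :=
  ∀ x : L, {F : Set L | F.Finite ∧ finWayBelow F x}.Nonempty ∧
    DirectedOn (fun F G => up G ⊆ up F) {F : Set L | F.Finite ∧ finWayBelow F x} ∧
    up ({x} : Set L) = ⋂ F ∈ {F : Set L | F.Finite ∧ finWayBelow F x}, up F

/-- A dcpo: every (nonempty) directed subset has a least upper bound. -/
def IsDcpo (L : Type*) [Preorder L] : Prop :=
  ∀ D : Set L, D.Nonempty → DirectedOn (· ≤ ·) D → ∃ x, IsLUB D x

end OrderDefs


/-!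
Scott closed sets are the lower sets closed under directed sups, so `A' ⊆ A'' ⊆ cl(A)` always.
The key observation is that a directed `E ⊆ ↓x` with `x ≤ sup E` has supremum exactly `x`.
Hence a witness of `x ∈ (↓D ∩ ↓x)''` is a witness of `x ∈ D'`, which is what meet continuity adds
to weak one-step closure; conversely, a directed `E ⊆ ↓D` with supremum `x` lies in `↓D ∩ ↓x`.
-/

section Preorder

variable {L : Type*} [Preorder L]

lemma dw_mono {A B : Set L} (h : A ⊆ B) : dw A ⊆ dw B := by
  rintro x ⟨a, ha, hxa⟩
  exact ⟨a, h ha, hxa⟩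

lemma subset_dw (A : Set L) : A ⊆ dw A := fun x hx => ⟨x, hx, le_rfl⟩

lemma dw_dw (A : Set L) : dw (dw A) ⊆ dw A := by
  rintro x ⟨b, ⟨a, ha, hba⟩, hxb⟩
  exact ⟨a, ha, hxb.trans hba⟩

lemma dw_inter_subset (A B : Set L) : dw (A ∩ B) ⊆ dw A ∩ dw B :=
  subset_inter (dw_mono inter_subset_left) (dw_mono inter_subset_right)

lemma mem_dw_singleton {x y : L} : y ∈ dw ({x} : Set L) ↔ y ≤ x := by
  simp [dw]

lemma subset_scottCl (A : Set L) : A ⊆ scottCl A :=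
  @subset_closure L (Topology.scott L univ) A

lemma isLowerSet_scottCl (A : Set L) : IsLowerSet (scottCl A) :=
  let _ := Topology.scott L univ
  have : Topology.IsScott L univ := ⟨rfl⟩
  Topology.IsScott.isLowerSet_of_isClosed isClosed_closure

lemma dirSupClosed_scottCl (A : Set L) : DirSupClosed (scottCl A) :=
  let _ := Topology.scott L univ
  have : Topology.IsScott L univ := ⟨rfl⟩
  Topology.IsScott.dirSupClosed_of_isClosed isClosed_closure

lemma dw_subset_scottCl (A : Set L) : dw A ⊆ scottCl A := by
  rintro x ⟨a, ha, hxa⟩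
  exact isLowerSet_scottCl A hxa (subset_scottCl A ha)

lemma oneStep_subset_oneStep_of_subset_dw {A B : Set L} (h : B ⊆ dw A) :
    oneStep B ⊆ oneStep A := by
  rintro x ⟨E, hE, hEne, hEdir, hx⟩
  exact ⟨E, hE.trans ((dw_mono h).trans (dw_dw A)), hEne, hEdir, hx⟩

lemma oneStep_subset_weakOneStep (A : Set L) : oneStep A ⊆ weakOneStep A := by
  rintro x ⟨D, hD, hDne, hDdir, hx⟩
  exact ⟨D, hD, hDne, hDdir, x, hx, le_rfl⟩

lemma weakOneStep_subset_scottCl (A : Set L) : weakOneStep A ⊆ scottCl A := by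
  rintro x ⟨D, hD, hDne, hDdir, y, hy, hxy⟩
  exact isLowerSet_scottCl A hxy
    (dirSupClosed_scottCl A (hD.trans (dw_subset_scottCl A)) hDne hDdir hy)

lemma oneStep_subset_scottCl (A : Set L) : oneStep A ⊆ scottCl A :=
  (oneStep_subset_weakOneStep A).trans (weakOneStep_subset_scottCl A)

lemma isLUB_of_le_of_mem_upperBounds {E : Set L} {x y : L} (hy : IsLUB E y) (hxy : x ≤ y)
    (hx : x ∈ upperBounds E) : IsLUB E x :=
  ⟨hx, fun _ hu => hxy.trans (hy.2 hu)⟩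

lemma mem_oneStep_dw_inter_dw_singleton {A : Set L} {x : L} (hx : x ∈ oneStep A) :
    x ∈ oneStep (dw A ∩ dw {x}) := by
  obtain ⟨E, hE, hEne, hEdir, hEx⟩ := hx
  exact ⟨E, fun e he => subset_dw _ ⟨hE he, mem_dw_singleton.2 (hEx.1 he)⟩, hEne, hEdir, hEx⟩

lemma mem_oneStep_of_mem_weakOneStep_dw_inter_dw_singleton {A : Set L} {x : L}
    (hx : x ∈ weakOneStep (dw A ∩ dw {x})) : x ∈ oneStep A := by
  obtain ⟨E, hE, hEne, hEdir, y, hy, hxy⟩ := hx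
  have hE' : E ⊆ dw (dw A) ∩ dw (dw {x}) := hE.trans (dw_inter_subset _ _)
  refine ⟨E, fun e he => dw_dw A (hE' he).1, hEne, hEdir,
    isLUB_of_le_of_mem_upperBounds hy hxy fun e he => ?_⟩
  exact mem_dw_singleton.1 (dw_dw _ (hE' he).2)

lemma HasOneStepClosure.hasWeakOneStepClosure (h : HasOneStepClosure L) :
    HasWeakOneStepClosure L := fun A =>
  (weakOneStep_subset_scottCl A).antisymm' (h A ▸ oneStep_subset_weakOneStep A)

lemma HasOneStepClosure.meetContinuous (h : HasOneStepClosure L) : MeetContinuous L := by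
  intro x D hDne hDdir s hs hxs
  have hs_cl : s ∈ scottCl D := dirSupClosed_scottCl D (subset_scottCl D) hDne hDdir hs
  have hx_cl : x ∈ oneStep D := h D ▸ isLowerSet_scottCl D hxs hs_cl
  exact oneStep_subset_scottCl _ (mem_oneStep_dw_inter_dw_singleton hx_cl)

lemma MeetContinuous.hasOneStepClosure (hmc : MeetContinuous L) (hw : HasWeakOneStepClosure L) :
    HasOneStepClosure L := by
  refine fun A => (oneStep_subset_scottCl A).antisymm' fun x hx => ?_
  obtain ⟨D, hD, hDne, hDdir, y, hy, hxy⟩ := hw A ▸ hx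
  have hx' : x ∈ weakOneStep (dw D ∩ dw {x}) := hw _ ▸ hmc x D hDne hDdir y hy hxy
  exact oneStep_subset_oneStep_of_subset_dw hD
    (mem_oneStep_of_mem_weakOneStep_dw_inter_dw_singleton hx')

end Preorder

/-- A poset has one-step closure iff it is meet continuous and has weak one-step closure. -/
theorem hasOneStepClosure_iff_meetContinuous_and_weak {L : Type*} [PartialOrder L] :
    HasOneStepClosure L ↔ MeetContinuous L ∧ HasWeakOneStepClosure L :=
  ⟨fun h => ⟨h.meetContinuous, h.hasWeakOneStepClosure⟩,
    fun ⟨hmc, hw⟩ => hmc.hasOneStepClosure hw⟩
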